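/- Let $T>0$, $u_0\in\mathbb{C}$ with $\Re(u_0)\le 0$, and let $a,b,c:[0,T]\to\mathbb{C}$ be measurable bounded functions with $\Im(a(t))=0$, $a(t)>0$, and $\Re(c(t)) + \Im(b(t))^2/(4a(t)) \le 0$ for all $t\le T$. Then any solution $\psi:[0,t^*]\to\mathbb{C}$ of the Riccati ODE $\psi'(t)=a(t)\psi(t)^2+b(t)\psi(t)+c(t)$, $\psi(0)=u_0$, satisfies $\Re(\psi(t))\le 0$ for all $t$ in its interval of existence. -/

import Mathlib

open Set

/-!
Writing `ψ = p + i q` and using that `a` is real and positive, the real part of the right-hand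
side is `(a p + b.re) p + (c.re - b.im q - a q²)`, and the second summand is at most
`c.re + b.im² / (4 a) ≤ 0`. Hence `p' ≤ k p` with `k = a p + b.re` bounded on `[0, t*]`, and a
comparison with `ε e^{L t}` shows that `p` cannot become positive.
-/

theorem nonpos_of_deriv_right_le_mul_of_pos {f f' : ℝ → ℝ} {a b K : ℝ}
    (hf : ContinuousOn f (Icc a b))
    (hf' : ∀ x ∈ Ico a b, HasDerivWithinAt f (f' x) (Ici x) x) (ha : f a ≤ 0)
    (bound : ∀ x ∈ Ico a b, 0 < f x → f' x ≤ K * f x) :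
    ∀ x ∈ Icc a b, f x ≤ 0 := by
  set L := |K| + 1
  have barrier : ∀ ε > 0, ∀ x ∈ Icc a b, f x ≤ ε * Real.exp (L * x) := by
    intro ε hε
    have hB : ∀ x, HasDerivAt (fun t => ε * Real.exp (L * t)) (L * (ε * Real.exp (L * x))) x :=
      fun x => (((hasDerivAt_id x).const_mul L).exp.const_mul ε).congr_deriv
        (by simp only [id, mul_one]; ring)
    refine image_le_of_deriv_right_lt_deriv_boundary hf hf' (ha.trans (by positivity)) hB ?_
    intro x hx hfx
    have hpos : 0 < f x := hfx ▸ by positivity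
    calc f' x ≤ K * f x := bound x hx hpos
      _ ≤ |K| * f x := by gcongr; exact le_abs_self K
      _ < L * f x := by gcongr; exact lt_add_one _
      _ = L * (ε * Real.exp (L * x)) := by rw [hfx]
  intro x hx
  refine le_of_forall_pos_le_add fun δ hδ => ?_
  calc f x ≤ δ / Real.exp (L * x) * Real.exp (L * x) := barrier _ (by positivity) x hx
    _ = 0 + δ := by rw [div_mul_cancel₀ _ (Real.exp_pos _).ne', zero_add]

theorem re_riccati_le {a b c : ℂ} (ha_im : a.im = 0) (ha : 0 < a.re)
    (hc : c.re + b.im ^ 2 / (4 * a.re) ≤ 0) (z : ℂ) :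
    (a * z ^ 2 + b * z + c).re ≤ (a.re * z.re + b.re) * z.re := by
  have hre : (a * z ^ 2 + b * z + c).re
      = (a.re * z.re + b.re) * z.re + (c.re - b.im * z.im - a.re * z.im ^ 2) := by
    simp only [Complex.add_re, Complex.mul_re, Complex.mul_im, pow_two, ha_im]
    ring
  have hdisc : 4 * a.re * c.re + b.im ^ 2 ≤ 0 := by
    have h := (div_le_iff₀ (by positivity : (0 : ℝ) < 4 * a.re)).1 (by linarith : b.im ^ 2 / (4 * a.re) ≤ -c.re)
    linarith
  rw [hre]
  nlinarith [sq_nonneg (2 * a.re * z.im + b.im)]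

theorem re_mul_re_add_re_le_norm (a b z : ℂ) : a.re * z.re + b.re ≤ ‖a‖ * ‖z‖ + ‖b‖ := by
  have hprod : a.re * z.re ≤ ‖a‖ * ‖z‖ :=
    calc a.re * z.re ≤ |a.re| * |z.re| := by rw [← abs_mul]; exact le_abs_self _
      _ ≤ ‖a‖ * ‖z‖ := mul_le_mul (Complex.abs_re_le_norm a) (Complex.abs_re_le_norm z)
          (abs_nonneg _) (norm_nonneg _)
  linarith [Complex.re_le_norm b]

theorem stmt0 (T : ℝ) (u0 : ℂ) (hu0 : u0.re ≤ 0)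
    (a b c : ℝ → ℂ)
    (M : ℝ) (hbdd : ∀ t ∈ Icc (0:ℝ) T, ‖a t‖ ≤ M ∧ ‖b t‖ ≤ M ∧ ‖c t‖ ≤ M)
    (haim : ∀ t ∈ Icc (0:ℝ) T, (a t).im = 0)
    (hapos : ∀ t ∈ Icc (0:ℝ) T, 0 < (a t).re)
    (hcond : ∀ t ∈ Icc (0:ℝ) T, (c t).re + (b t).im ^ 2 / (4 * (a t).re) ≤ 0)
    (tstar : ℝ) (ht2 : tstar ≤ T)
    (ψ : ℝ → ℂ) (hψ0 : ψ 0 = u0)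
    (hode : ∀ t ∈ Icc (0:ℝ) tstar, HasDerivAt ψ (a t * ψ t ^ 2 + b t * ψ t + c t) t) :
    ∀ t ∈ Icc (0:ℝ) tstar, (ψ t).re ≤ 0 := by
  have hsub : Icc (0:ℝ) tstar ⊆ Icc (0:ℝ) T := Icc_subset_Icc le_rfl ht2
  have hψcont : ContinuousOn ψ (Icc (0:ℝ) tstar) := fun t ht =>
    (hode t ht).continuousAt.continuousWithinAt
  obtain ⟨B, hB⟩ := isCompact_Icc.exists_bound_of_continuousOn hψcont
  refine nonpos_of_deriv_right_le_mul_of_pos (K := M * B + M)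
    (Complex.continuous_re.comp_continuousOn hψcont)
    (fun t ht => (Complex.reCLM.hasFDerivAt.comp_hasDerivAt t
      (hode t (Ico_subset_Icc_self ht))).hasDerivWithinAt) (hψ0 ▸ hu0) ?_
  intro t ht hpos
  have ht' := hsub (Ico_subset_Icc_self ht)
  obtain ⟨haM, hbM, -⟩ := hbdd t ht'
  have hk : (a t).re * (ψ t).re + (b t).re ≤ M * B + M :=
    (re_mul_re_add_re_le_norm _ _ _).trans <| add_le_add
      (mul_le_mul haM (hB t (Ico_subset_Icc_self ht)) (norm_nonneg _)
        ((norm_nonneg _).trans haM)) hbM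
  calc (a t * ψ t ^ 2 + b t * ψ t + c t).re
      ≤ ((a t).re * (ψ t).re + (b t).re) * (ψ t).re :=
        re_riccati_le (haim t ht') (hapos t ht') (hcond t ht') _
    _ ≤ (M * B + M) * (ψ t).re := by gcongr
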